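/- Let a > 0, let 1 ≤ q < r < ∞ satisfy nq < aγr, and set M_{r,q} = a^{1/q}·((r−q)/(aγr − nq))^{(r−q)/(rq)}. Then for every Borel measurable function g : Ω_γ → ℝ, inf_{c ∈ ℝ} ( ∫_{Ω_γ} |g(y) − c|^q dy )^{1/q} ≤ M_{r,q} · inf_{c ∈ ℝ} ( ∫_{Ω_n} |g(φ_a(x)) − c|^r dx )^{1/r}, the inequality being understood in [0, ∞]. -/

import Mathlib

open MeasureTheory Real Finset
open scoped ENNReal BigOperators

noncomputable section

/-- The model Lipschitz domain `Ω_n` (dimension `n+1`): `0 < x_last < 1` and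
`0 < x_i < x_last` for the first `n` coordinates. -/
def OmegaModel (n : ℕ) : Set (EuclideanSpace ℝ (Fin (n + 1))) :=
  {x | 0 < x (Fin.last n) ∧ x (Fin.last n) < 1 ∧
    ∀ i : Fin n, 0 < x i.castSucc ∧ x i.castSucc < x (Fin.last n)}

/-- The outward cuspidal domain `Ω_γ` (dimension `n+1`) with Hölder exponents `γi`. -/
def OmegaGamma (n : ℕ) (γi : Fin n → ℝ) : Set (EuclideanSpace ℝ (Fin (n + 1))) :=
  {x | 0 < x (Fin.last n) ∧ x (Fin.last n) < 1 ∧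
    ∀ i : Fin n, 0 < x i.castSucc ∧ x i.castSucc < x (Fin.last n) ^ γi i}

/-- The cusp map `φ_a(x) = (x_1 x_last^{aγ_1-1}, …, x_n x_last^{aγ_n-1}, x_last^a)`. -/
def phiMap (n : ℕ) (γi : Fin n → ℝ) (a : ℝ)
    (x : EuclideanSpace ℝ (Fin (n + 1))) : EuclideanSpace ℝ (Fin (n + 1)) :=
  WithLp.toLp 2 (fun j => Fin.lastCases (x (Fin.last n) ^ a)
    (fun i => x i.castSucc * x (Fin.last n) ^ (a * γi i - 1)) j)

/-!
The substitution `y = φ_a(x)` has Jacobian `a x_n^(aγ-n)` (its derivative is triangular), so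
`∫_{Ω_γ} |g - c|^q = ∫_{Ω_n} a x_n^(aγ-n) |g ∘ φ_a - c|^q`. Hölder's inequality with the
exponents `r/(r-q)` and `r/q` bounds this by the `L^r` norm of `g ∘ φ_a - c` times a norm of the
weight alone. Since the slice of `Ω_n` at height `x_n = t` is the cube `(0,t)^(n-1)`, that weight
integral is the one-variable integral `∫_0^1 a^(r/(r-q)) t^(r(aγ-n)/(r-q) + n - 1) dt`, which is
finite exactly when `nq < aγr` and yields the constant `M_{r,q}`. Then take the infimum over `c`.
-/

theorem ENNReal.lintegral_mul_rpow_le {α : Type*} [MeasurableSpace α] (μ : Measure α) {q r : ℝ}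
    (hq : 0 < q) (hqr : q < r) {w f : α → ℝ≥0∞} (hw : AEMeasurable w μ) (hf : AEMeasurable f μ) :
    (∫⁻ x, w x * f x ^ q ∂μ) ^ (1 / q) ≤
      (∫⁻ x, w x ^ (r / (r - q)) ∂μ) ^ ((r - q) / (r * q)) * (∫⁻ x, f x ^ r ∂μ) ^ (1 / r) := by
  have hr : 0 < r := hq.trans hqr
  have hconj : (r / (r - q)).HolderConjugate (r / q) := by
    rw [Real.holderConjugate_iff, one_lt_div (by linarith)]
    exact ⟨by linarith, by field_simp; ring⟩
  have hfr : ∀ x, (f x ^ q) ^ (r / q) = f x ^ r := fun x => by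
    rw [← ENNReal.rpow_mul, mul_div_cancel₀ r hq.ne']
  calc (∫⁻ x, w x * f x ^ q ∂μ) ^ (1 / q)
      ≤ ((∫⁻ x, w x ^ (r / (r - q)) ∂μ) ^ (1 / (r / (r - q))) *
          (∫⁻ x, (f x ^ q) ^ (r / q) ∂μ) ^ (1 / (r / q))) ^ (1 / q) :=
        ENNReal.rpow_le_rpow (ENNReal.lintegral_mul_le_Lp_mul_Lq μ hconj hw (hf.pow_const q))
          (by positivity)
    _ = _ := by
        rw [ENNReal.mul_rpow_of_nonneg _ _ (by positivity), ← ENNReal.rpow_mul, ← ENNReal.rpow_mul]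
        simp_rw [hfr]
        congr 2 <;> field_simp

theorem lintegral_Ioo_zero_one_rpow {s : ℝ} (hs : -1 < s) :
    ∫⁻ t in Set.Ioo 0 1, ENNReal.ofReal (t ^ s) = ENNReal.ofReal (1 / (s + 1)) := by
  rw [← ofReal_integral_eq_lintegral_ofReal ((intervalIntegral.integrableOn_Ioo_rpow_iff
      zero_lt_one).2 hs) ((ae_restrict_mem measurableSet_Ioo).mono fun t ht =>
      Real.rpow_nonneg ht.1.le s),
    ← integral_Ioc_eq_integral_Ioo, ← intervalIntegral.integral_of_le zero_le_one,
    integral_rpow (Or.inl hs), Real.one_rpow, Real.zero_rpow (by linarith), sub_zero]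

theorem measurableSet_omegaModel (n : ℕ) : MeasurableSet (OmegaModel n) := by
  unfold OmegaModel
  measurability

theorem lintegral_omegaModel_comp_last (n : ℕ) {f : ℝ → ℝ≥0∞} (hf : Measurable f) :
    ∫⁻ x in OmegaModel n, f (x (Fin.last n)) =
      ∫⁻ t in Set.Ioo 0 1, ENNReal.ofReal t ^ n * f t := by
  let e := (MeasurableEquiv.piFinSuccAbove (fun _ : Fin (n + 1) => ℝ) (Fin.last n)).symm.trans
    (MeasurableEquiv.toLp 2 (Fin (n + 1) → ℝ))
  have he : MeasurePreserving e :=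
    (PiLp.volume_preserving_toLp _).comp (volume_preserving_piFinSuccAbove _ _).symm
  have he_last : ∀ p, e p (Fin.last n) = p.1 := by simp [e, MeasurableEquiv.piFinSuccAbove]
  have he_castSucc : ∀ p (i : Fin n), e p i.castSucc = p.2 i := by
    simp [e, MeasurableEquiv.piFinSuccAbove]
  let cube (t : ℝ) : Set (Fin n → ℝ) := Set.univ.pi fun _ => Set.Ioo 0 t
  have hcube : ∀ t, MeasurableSet (cube t) := fun t => .univ_pi fun _ => measurableSet_Ioo
  set T : Set (ℝ × (Fin n → ℝ)) := {p | p.1 ∈ Set.Ioo 0 1 ∧ p.2 ∈ cube p.1}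
  have hT : MeasurableSet T := by measurability
  have hpre : e ⁻¹' OmegaModel n = T := by
    ext p
    simp [OmegaModel, T, cube, he_last, he_castSucc, and_assoc]
  have hslice : ∀ t y, T.indicator (fun p => f p.1) (t, y) =
      (Set.Ioo 0 1).indicator f t * (cube t).indicator 1 y := by
    intro t y
    by_cases hp : (t, y) ∈ T
    · rw [Set.indicator_of_mem hp, Set.indicator_of_mem hp.1, Set.indicator_of_mem hp.2,
        Pi.one_apply, mul_one]
    · rcases not_and_or.1 hp with ht | hy
      · rw [Set.indicator_of_notMem hp, Set.indicator_of_notMem ht, zero_mul]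
      · rw [Set.indicator_of_notMem hp, Set.indicator_of_notMem hy, mul_zero]
  rw [← he.setLIntegral_comp_preimage_emb e.measurableEmbedding, hpre]
  simp_rw [he_last]
  rw [← lintegral_indicator hT, ← lintegral_indicator measurableSet_Ioo, Measure.volume_eq_prod,
    lintegral_prod]
  · refine lintegral_congr fun t => ?_
    simp_rw [hslice]
    rw [lintegral_const_mul _ (measurable_one.indicator (hcube t)),
      lintegral_indicator_one (hcube t)]
    by_cases ht : t ∈ Set.Ioo 0 1 <;> simp [ht, cube, volume_pi_pi, Real.volume_Ioo, mul_comm]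
  · exact ((hf.comp measurable_fst).indicator hT).aemeasurable

theorem lintegral_omegaModel_rpow_last (n : ℕ) {s : ℝ} (hs : -1 < s + n) :
    ∫⁻ x in OmegaModel n, ENNReal.ofReal (x (Fin.last n) ^ s) =
      ENNReal.ofReal (1 / (s + n + 1)) := by
  rw [lintegral_omegaModel_comp_last n (f := fun t => ENNReal.ofReal (t ^ s)) (by fun_prop),
    ← lintegral_Ioo_zero_one_rpow hs]
  refine setLIntegral_congr_fun measurableSet_Ioo fun t ht => ?_
  rw [← ENNReal.ofReal_pow ht.1.le, ← ENNReal.ofReal_mul (pow_nonneg ht.1.le n),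
    ← Real.rpow_natCast, ← Real.rpow_add ht.1, add_comm]

theorem lintegral_omegaModel_mul_rpow_last_rpow (n : ℕ) {c e p : ℝ} (hc : 0 ≤ c) (hp : 0 ≤ p)
    (h : -1 < e * p + n) :
    ∫⁻ x in OmegaModel n, ENNReal.ofReal (c * x (Fin.last n) ^ e) ^ p =
      ENNReal.ofReal (c ^ p / (e * p + n + 1)) := by
  have hpoint : ∀ x ∈ OmegaModel n, ENNReal.ofReal (c * x (Fin.last n) ^ e) ^ p =
      ENNReal.ofReal (c ^ p) * ENNReal.ofReal (x (Fin.last n) ^ (e * p)) := fun x hx => by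
    rw [ENNReal.ofReal_rpow_of_nonneg (mul_nonneg hc (Real.rpow_nonneg hx.1.le _)) hp,
      Real.mul_rpow hc (Real.rpow_nonneg hx.1.le _), ← Real.rpow_mul hx.1.le,
      ENNReal.ofReal_mul (Real.rpow_nonneg hc _)]
  rw [setLIntegral_congr_fun (measurableSet_omegaModel n) hpoint,
    lintegral_const_mul _ (by fun_prop), lintegral_omegaModel_rpow_last n h,
    ← ENNReal.ofReal_mul (Real.rpow_nonneg hc _), mul_one_div]

section CuspMap

variable {n : ℕ} {γi : Fin n → ℝ} {a : ℝ}

@[simp] theorem phiMap_apply_last (x : EuclideanSpace ℝ (Fin (n + 1))) :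
    phiMap n γi a x (Fin.last n) = x (Fin.last n) ^ a := by
  simp [phiMap]

@[simp] theorem phiMap_apply_castSucc (x : EuclideanSpace ℝ (Fin (n + 1))) (i : Fin n) :
    phiMap n γi a x i.castSucc = x i.castSucc * x (Fin.last n) ^ (a * γi i - 1) := by
  simp [phiMap]

theorem measurable_phiMap : Measurable (phiMap n γi a) := by
  refine (MeasurableEquiv.toLp 2 _).measurable.comp (measurable_pi_lambda _ fun j => ?_)
  induction j using Fin.lastCases with
  | last => simp only [Fin.lastCases_last]; fun_prop
  | cast i => simp only [Fin.lastCases_castSucc]; fun_prop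

def phiMapFDeriv (n : ℕ) (γi : Fin n → ℝ) (a : ℝ) (x : EuclideanSpace ℝ (Fin (n + 1))) :
    EuclideanSpace ℝ (Fin (n + 1)) →L[ℝ] EuclideanSpace ℝ (Fin (n + 1)) :=
  (PiLp.continuousLinearEquiv 2 ℝ fun _ : Fin (n + 1) => ℝ).symm.toContinuousLinearMap ∘L
    ContinuousLinearMap.pi fun j => Fin.lastCases
      ((a * x (Fin.last n) ^ (a - 1)) • PiLp.proj 2 (fun _ => ℝ) (Fin.last n))
      (fun i => x (Fin.last n) ^ (a * γi i - 1) • PiLp.proj 2 (fun _ => ℝ) i.castSucc +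
        (x i.castSucc * ((a * γi i - 1) * x (Fin.last n) ^ (a * γi i - 1 - 1))) •
          PiLp.proj 2 (fun _ => ℝ) (Fin.last n)) j

theorem hasFDerivAt_phiMap {x : EuclideanSpace ℝ (Fin (n + 1))} (hx : 0 < x (Fin.last n)) :
    HasFDerivAt (phiMap n γi a) (phiMapFDeriv n γi a x) x := by
  rw [← hasFDerivWithinAt_univ, hasFDerivWithinAt_piLp]
  have hlast : ∀ e : ℝ, HasFDerivAt (fun y : EuclideanSpace ℝ (Fin (n + 1)) => y (Fin.last n) ^ e)
      ((e * x (Fin.last n) ^ (e - 1)) • PiLp.proj 2 (fun _ => ℝ) (Fin.last n)) x := fun e => by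
    exact (Real.hasDerivAt_rpow_const (Or.inl hx.ne')).comp_hasFDerivAt x
      (PiLp.hasFDerivAt_apply (𝕜 := ℝ) 2 x (Fin.last n))
  intro j
  refine HasFDerivAt.hasFDerivWithinAt ?_
  induction j using Fin.lastCases with
  | last =>
    simp only [phiMap_apply_last]
    refine (hlast a).congr_fderiv ?_
    ext v
    simp [phiMapFDeriv]
  | cast i =>
    simp only [phiMap_apply_castSucc]
    refine ((PiLp.hasFDerivAt_apply 2 x i.castSucc).mul (hlast (a * γi i - 1))).congr_fderiv ?_
    ext v
    simp only [phiMapFDeriv, ContinuousLinearMap.comp_apply, ContinuousLinearMap.coe_pi',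
      ContinuousLinearEquiv.coe_coe, PiLp.continuousLinearEquiv_symm_apply, Fin.lastCases_castSucc,
      add_apply, smul_apply, PiLp.proj_apply, smul_eq_mul]
    ring

theorem det_phiMapFDeriv {x : EuclideanSpace ℝ (Fin (n + 1))} (hx : 0 < x (Fin.last n)) :
    (phiMapFDeriv n γi a x).det = a * x (Fin.last n) ^ (a * (1 + ∑ i, γi i) - (n + 1)) := by
  set b := (EuclideanSpace.basisFun (Fin (n + 1)) ℝ).toBasis
  have hentry : ∀ j k, LinearMap.toMatrix b b (phiMapFDeriv n γi a x).toLinearMap j k =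
      phiMapFDeriv n γi a x (EuclideanSpace.single k 1) j := fun j k => by
    simp [b, LinearMap.toMatrix_apply]
  have htri : (LinearMap.toMatrix b b (phiMapFDeriv n γi a x).toLinearMap).BlockTriangular id := by
    intro j k hkj
    rw [hentry]
    have hk : k ≠ Fin.last n := (hkj.trans_le (Fin.le_last j)).ne
    induction j using Fin.lastCases with
    | last => simp [phiMapFDeriv, hk.symm]
    | cast i => simp [phiMapFDeriv, hk.symm, (show k < i.castSucc from hkj).ne']
  rw [ContinuousLinearMap.det, ← LinearMap.det_toMatrix b, Matrix.det_of_isUpperTriangular htri,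
    Fin.prod_univ_castSucc]
  simp only [hentry]
  simp only [phiMapFDeriv, ContinuousLinearMap.comp_apply, ContinuousLinearMap.coe_pi',
    ContinuousLinearEquiv.coe_coe, PiLp.continuousLinearEquiv_symm_apply, Fin.lastCases_castSucc,
    Fin.lastCases_last, add_apply, smul_apply, PiLp.proj_apply, PiLp.single_eq_same, smul_eq_mul,
    mul_one, ne_eq, Fin.castSucc_ne_last, not_false_eq_true, PiLp.single_eq_of_ne', mul_zero,
    add_zero]
  rw [← Real.rpow_sum_of_pos hx, mul_left_comm, ← Real.rpow_add hx]
  congr 2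
  simp only [sum_sub_distrib, ← mul_sum, sum_const, card_univ, Fintype.card_fin, nsmul_eq_mul,
    mul_one]
  ring

theorem injOn_phiMap (ha : 0 < a) : Set.InjOn (phiMap n γi a) (OmegaModel n) := by
  intro x hx x' hx' h
  have ht : x (Fin.last n) = x' (Fin.last n) := by
    rw [← Real.rpow_left_inj hx.1.le hx'.1.le ha.ne', ← phiMap_apply_last (γi := γi),
      ← phiMap_apply_last (γi := γi), h]
  ext j
  induction j using Fin.lastCases with
  | last => exact ht
  | cast i =>
    have hi := congrArg (fun y : EuclideanSpace ℝ (Fin (n + 1)) => y i.castSucc) h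
    simp only [phiMap_apply_castSucc, ht] at hi
    exact mul_right_cancel₀ (Real.rpow_pos_of_pos hx'.1 _).ne' hi

theorem mapsTo_phiMap (ha : 0 < a) :
    Set.MapsTo (phiMap n γi a) (OmegaModel n) (OmegaGamma n γi) := by
  rintro x ⟨ht0, ht1, hi⟩
  refine ⟨?_, ?_, fun i => ?_⟩
  · simpa using Real.rpow_pos_of_pos ht0 a
  · simpa using Real.rpow_lt_one ht0.le ht1 ha
  · have hcusp : (x (Fin.last n) ^ a) ^ γi i =
        x (Fin.last n) * x (Fin.last n) ^ (a * γi i - 1) := by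
      rw [← Real.rpow_mul ht0.le, Real.rpow_sub_one ht0.ne', mul_div_cancel₀ _ ht0.ne']
    simp only [phiMap_apply_castSucc, phiMap_apply_last, hcusp]
    exact ⟨mul_pos (hi i).1 (Real.rpow_pos_of_pos ht0 _),
      mul_lt_mul_of_pos_right (hi i).2 (Real.rpow_pos_of_pos ht0 _)⟩

theorem surjOn_phiMap (ha : 0 < a) :
    Set.SurjOn (phiMap n γi a) (OmegaModel n) (OmegaGamma n γi) := by
  rintro y ⟨hu0, hu1, hyi⟩
  set t : ℝ := y (Fin.last n) ^ (1 / a)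
  have ht0 : 0 < t := Real.rpow_pos_of_pos hu0 _
  have hta : t ^ a = y (Fin.last n) := by
    rw [← Real.rpow_mul hu0.le, one_div_mul_cancel ha.ne', Real.rpow_one]
  refine ⟨WithLp.toLp 2 fun j => Fin.lastCases t (fun i => y i.castSucc * t ^ (1 - a * γi i)) j,
    ⟨by simpa using ht0, by simpa using Real.rpow_lt_one hu0.le hu1 (by positivity), fun i => ?_⟩,
    ?_⟩
  · have hys : y i.castSucc < t ^ (a * γi i) := by
      rw [Real.rpow_mul ht0.le, hta]
      exact (hyi i).2
    simp only [Fin.lastCases_castSucc, Fin.lastCases_last]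
    refine ⟨mul_pos (hyi i).1 (Real.rpow_pos_of_pos ht0 _), ?_⟩
    calc y i.castSucc * t ^ (1 - a * γi i) < t ^ (a * γi i) * t ^ (1 - a * γi i) :=
          mul_lt_mul_of_pos_right hys (Real.rpow_pos_of_pos ht0 _)
      _ = t := by rw [← Real.rpow_add ht0, add_sub_cancel, Real.rpow_one]
  · ext j
    induction j using Fin.lastCases with
    | last => simpa using hta
    | cast i =>
      simp only [phiMap_apply_castSucc, Fin.lastCases_castSucc, Fin.lastCases_last]
      rw [mul_assoc, ← Real.rpow_add ht0, sub_add_sub_cancel', sub_self, Real.rpow_zero, mul_one]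

theorem image_phiMap_omegaModel (ha : 0 < a) :
    phiMap n γi a '' OmegaModel n = OmegaGamma n γi :=
  (mapsTo_phiMap ha).image_subset.antisymm (surjOn_phiMap ha)

theorem lintegral_omegaGamma_eq_lintegral_omegaModel (ha : 0 < a)
    (f : EuclideanSpace ℝ (Fin (n + 1)) → ℝ≥0∞) :
    ∫⁻ y in OmegaGamma n γi, f y =
      ∫⁻ x in OmegaModel n, ENNReal.ofReal
        (a * x (Fin.last n) ^ (a * (1 + ∑ i, γi i) - (n + 1))) * f (phiMap n γi a x) := by
  rw [← image_phiMap_omegaModel ha, lintegral_image_eq_lintegral_abs_det_fderiv_mul volume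
    (measurableSet_omegaModel n) (fun x hx => (hasFDerivAt_phiMap hx.1).hasFDerivWithinAt)
    (injOn_phiMap ha) f]
  refine setLIntegral_congr_fun (measurableSet_omegaModel n) fun x hx => ?_
  rw [det_phiMapFDeriv hx.1, abs_of_pos (by have := hx.1; positivity)]

end CuspMap

theorem statement11_general (n : ℕ) (γi : Fin n → ℝ)
    (γ : ℝ) (hγ : γ = 1 + ∑ i, γi i)
    (a q r : ℝ) (ha : 0 < a) (hq : 1 ≤ q) (hqr : q < r)
    (h : (n + 1 : ℝ) * q < a * γ * r)
    (g : EuclideanSpace ℝ (Fin (n + 1)) → ℝ) (hg : Measurable g) :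
    (⨅ c : ℝ, (∫⁻ y in OmegaGamma n γi, ENNReal.ofReal (|g y - c| ^ q)) ^ (1 / q)) ≤
      ENNReal.ofReal (a ^ (1 / q) *
          ((r - q) / (a * γ * r - (n + 1) * q)) ^ ((r - q) / (r * q))) *
        ⨅ c : ℝ, (∫⁻ x in OmegaModel n,
            ENNReal.ofReal (|g (phiMap n γi a x) - c| ^ r)) ^ (1 / r) := by
  have hq0 : 0 < q := by linarith
  have hr0 : 0 < r := by linarith
  have hrq : 0 < r - q := by linarith
  have hden : 0 < a * γ * r - (n + 1) * q := by linarith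
  have hweight : (∫⁻ x in OmegaModel n, ENNReal.ofReal
      (a * x (Fin.last n) ^ (a * γ - (n + 1))) ^ (r / (r - q))) ^ ((r - q) / (r * q)) =
      ENNReal.ofReal (a ^ (1 / q) *
        ((r - q) / (a * γ * r - (n + 1) * q)) ^ ((r - q) / (r * q))) := by
    have hexp : (a * γ - (n + 1)) * (r / (r - q)) + n + 1 =
        (a * γ * r - (n + 1) * q) / (r - q) := by
      field_simp
      ring
    rw [lintegral_omegaModel_mul_rpow_last_rpow n ha.le (by positivity)
        (by linarith [div_pos hden hrq]), hexp,
      ENNReal.ofReal_rpow_of_nonneg (by positivity) (by positivity), div_div_eq_mul_div,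
      mul_div_assoc, Real.mul_rpow (by positivity) (by positivity), ← Real.rpow_mul ha.le]
    congr 3
    field_simp
  rw [ENNReal.mul_iInf_of_ne (by positivity) ENNReal.ofReal_ne_top]
  refine iInf_mono fun c => ?_
  rw [lintegral_omegaGamma_eq_lintegral_omegaModel ha, ← hγ, ← hweight]
  simp_rw [← ENNReal.ofReal_rpow_of_nonneg (abs_nonneg _) hq0.le,
    ← ENNReal.ofReal_rpow_of_nonneg (abs_nonneg _) (hq0.trans hqr).le]
  exact ENNReal.lintegral_mul_rpow_le _ hq0 hqr (by fun_prop)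
    (((hg.comp measurable_phiMap).sub_const c).abs.ennreal_ofReal.aemeasurable)

/-- For `a > 0`, `1 ≤ q < r < ∞` with `(n+1)q < aγr`, setting
`M_{r,q} = a^{1/q}·((r-q)/(aγr-(n+1)q))^{(r-q)/(rq)}`, every Borel measurable `g` satisfies
(in `[0,∞]`)
`inf_c (∫_{Ω_γ} |g - c|^q dy)^{1/q} ≤ M_{r,q} · inf_c (∫_{Ω_n} |g∘φ_a - c|^r dx)^{1/r}`.
(Paper dimension `n` is Lean `n + 1`.) -/
theorem statement11 (n : ℕ) (hn : 1 ≤ n) (γi : Fin n → ℝ) (hγi : ∀ i, 1 ≤ γi i)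
    (γ : ℝ) (hγ : γ = 1 + ∑ i, γi i)
    (a q r : ℝ) (ha : 0 < a) (hq : 1 ≤ q) (hqr : q < r)
    (h : (n + 1 : ℝ) * q < a * γ * r)
    (g : EuclideanSpace ℝ (Fin (n + 1)) → ℝ) (hg : Measurable g) :
    (⨅ c : ℝ, (∫⁻ y in OmegaGamma n γi, ENNReal.ofReal (|g y - c| ^ q)) ^ (1 / q)) ≤
      ENNReal.ofReal (a ^ (1 / q) *
          ((r - q) / (a * γ * r - (n + 1) * q)) ^ ((r - q) / (r * q))) *
        ⨅ c : ℝ, (∫⁻ x in OmegaModel n,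
            ENNReal.ofReal (|g (phiMap n γi a x) - c| ^ r)) ^ (1 / r) :=
  statement11_general n γi γ hγ a q r ha hq hqr h g hg
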